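/- Let γ ∈ SL₂(ℂ) \ SU₂(ℂ) with Ψ(γ) = [[A, C′],[C, A′]]. Then the center P = −C⁻¹A′ of the isometric sphere of Ψ(γ) satisfies ‖P‖² = (2 + ‖γ‖²)/(‖γ‖² − 2), and the radius R = 1/|C| satisfies R² = 4/(‖γ‖² − 2). -/

import Mathlib

/-!
Written out in coordinates, the bottom row `C, A′` of `Ψ(γ)` gives
`|C|² = (‖γ‖² − 2 Re det γ) / 4` and `|A′|² = (‖γ‖² + 2 Re det γ) / 4`.
For `det γ = 1` both claims then follow from the multiplicativity of the quaternion norm.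
-/

open scoped Quaternion
open Matrix

/-- Embedding of `ℂ` into the real quaternions `ℍ`. -/
noncomputable def toQ (z : ℂ) : ℍ[ℝ] := ⟨z.re, z.im, 0, 0⟩

/-- The quaternion `j`. -/
noncomputable def jq : ℍ[ℝ] := ⟨0, 0, 1, 0⟩

/-- The map `Ψ(γ) = ḡ γ g` where `g = (1/√2)[[1,j],[j,1]]`. -/
noncomputable def Ψ (γ : Matrix (Fin 2) (Fin 2) ℂ) : Matrix (Fin 2) (Fin 2) ℍ[ℝ] :=
  ((Real.sqrt 2)⁻¹ • !![(1 : ℍ[ℝ]), -jq; -jq, 1]) * (γ.map toQ) *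
    ((Real.sqrt 2)⁻¹ • !![(1 : ℍ[ℝ]), jq; jq, 1])

/-- `‖γ‖²`, the sum of the squared moduli of the entries of `γ`. -/
noncomputable def mnorm (γ : Matrix (Fin 2) (Fin 2) ℂ) : ℝ :=
  Complex.normSq (γ 0 0) + Complex.normSq (γ 0 1) + Complex.normSq (γ 1 0) + Complex.normSq (γ 1 1)

@[simp] lemma re_toQ (z : ℂ) : (toQ z).re = z.re := rfl
@[simp] lemma imI_toQ (z : ℂ) : (toQ z).imI = z.im := rfl
@[simp] lemma imJ_toQ (z : ℂ) : (toQ z).imJ = 0 := rfl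
@[simp] lemma imK_toQ (z : ℂ) : (toQ z).imK = 0 := rfl

@[simp] lemma re_jq : jq.re = 0 := rfl
@[simp] lemma imI_jq : jq.imI = 0 := rfl
@[simp] lemma imJ_jq : jq.imJ = 1 := rfl
@[simp] lemma imK_jq : jq.imK = 0 := rfl

lemma Ψ_eq_half_smul (γ : Matrix (Fin 2) (Fin 2) ℂ) :
    Ψ γ = (2⁻¹ : ℝ) • (!![(1 : ℍ[ℝ]), -jq; -jq, 1] * γ.map toQ * !![(1 : ℍ[ℝ]), jq; jq, 1]) := by
  rw [Ψ, Matrix.smul_mul, Matrix.mul_smul, Matrix.smul_mul, smul_smul, ← mul_inv,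
    Real.mul_self_sqrt zero_le_two]

lemma Ψ_one_zero (γ : Matrix (Fin 2) (Fin 2) ℂ) :
    Ψ γ 1 0 = (⟨((γ 1 0).re + (γ 0 1).re) / 2, ((γ 1 0).im - (γ 0 1).im) / 2,
      ((γ 1 1).re - (γ 0 0).re) / 2, ((γ 1 1).im + (γ 0 0).im) / 2⟩ : ℍ[ℝ]) := by
  simp only [Ψ_eq_half_smul, Matrix.smul_apply, Matrix.mul_apply, Fin.sum_univ_two]
  ext <;>
  simp only [of_apply, cons_val', cons_val_zero, cons_val_one, cons_val_fin_one, map_apply,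
    smul_eq_mul, Quaternion.re_add, Quaternion.re_neg, Quaternion.re_smul, Quaternion.re_mul,
    Quaternion.imI_add, Quaternion.imI_neg, Quaternion.imI_smul, Quaternion.imI_mul,
    Quaternion.imJ_add, Quaternion.imJ_neg, Quaternion.imJ_smul, Quaternion.imJ_mul,
    Quaternion.imK_add, Quaternion.imK_neg, Quaternion.imK_smul, Quaternion.imK_mul,
    Quaternion.re_one, Quaternion.imI_one, Quaternion.imJ_one, Quaternion.imK_one,
    re_toQ, imI_toQ, imJ_toQ, imK_toQ, re_jq, imI_jq, imJ_jq, imK_jq] <;>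
  ring

lemma Ψ_one_one (γ : Matrix (Fin 2) (Fin 2) ℂ) :
    Ψ γ 1 1 = (⟨((γ 0 0).re + (γ 1 1).re) / 2, ((γ 1 1).im - (γ 0 0).im) / 2,
      ((γ 1 0).re - (γ 0 1).re) / 2, ((γ 1 0).im + (γ 0 1).im) / 2⟩ : ℍ[ℝ]) := by
  simp only [Ψ_eq_half_smul, Matrix.smul_apply, Matrix.mul_apply, Fin.sum_univ_two]
  ext <;>
  simp only [of_apply, cons_val', cons_val_zero, cons_val_one, cons_val_fin_one, map_apply,
    smul_eq_mul, Quaternion.re_add, Quaternion.re_neg, Quaternion.re_smul, Quaternion.re_mul,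
    Quaternion.imI_add, Quaternion.imI_neg, Quaternion.imI_smul, Quaternion.imI_mul,
    Quaternion.imJ_add, Quaternion.imJ_neg, Quaternion.imJ_smul, Quaternion.imJ_mul,
    Quaternion.imK_add, Quaternion.imK_neg, Quaternion.imK_smul, Quaternion.imK_mul,
    Quaternion.re_one, Quaternion.imI_one, Quaternion.imJ_one, Quaternion.imK_one,
    re_toQ, imI_toQ, imJ_toQ, imK_toQ, re_jq, imI_jq, imJ_jq, imK_jq] <;>
  ring

lemma normSq_Ψ_one_zero (γ : Matrix (Fin 2) (Fin 2) ℂ) :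
    Quaternion.normSq (Ψ γ 1 0) = (mnorm γ - 2 * γ.det.re) / 4 := by
  rw [Quaternion.normSq_def', Ψ_one_zero, mnorm, Matrix.det_fin_two]
  simp only [Complex.normSq_apply, Complex.sub_re, Complex.mul_re]
  ring

lemma normSq_Ψ_one_one (γ : Matrix (Fin 2) (Fin 2) ℂ) :
    Quaternion.normSq (Ψ γ 1 1) = (mnorm γ + 2 * γ.det.re) / 4 := by
  rw [Quaternion.normSq_def', Ψ_one_one, mnorm, Matrix.det_fin_two]
  simp only [Complex.normSq_apply, Complex.sub_re, Complex.mul_re]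
  ring

theorem stmt5_general (γ : Matrix (Fin 2) (Fin 2) ℂ) (hdet : γ.det = 1) :
    Quaternion.normSq (-(Ψ γ 1 0)⁻¹ * Ψ γ 1 1) = (2 + mnorm γ) / (mnorm γ - 2) ∧
    (Quaternion.normSq (Ψ γ 1 0))⁻¹ = 4 / (mnorm γ - 2) := by
  have hC : Quaternion.normSq (Ψ γ 1 0) = (mnorm γ - 2) / 4 := by
    rw [normSq_Ψ_one_zero, hdet, Complex.one_re, mul_one]
  have hA' : Quaternion.normSq (Ψ γ 1 1) = (mnorm γ + 2) / 4 := by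
    rw [normSq_Ψ_one_one, hdet, Complex.one_re, mul_one]
  refine ⟨?_, by rw [hC, inv_div]⟩
  rw [map_mul, Quaternion.normSq_neg, map_inv₀, hC, hA', inv_div]
  ring

/-- For `γ ∈ SL₂(ℂ) \ SU₂(ℂ)` with `Ψ(γ) = [[A, C′],[C, A′]]`, the center `P = −C⁻¹A′` of the
isometric sphere of `Ψ(γ)` satisfies `‖P‖² = (2 + ‖γ‖²)/(‖γ‖² − 2)`, and the radius `R = 1/|C|`
satisfies `R² = 4/(‖γ‖² − 2)`. -/
theorem stmt5 (γ : Matrix (Fin 2) (Fin 2) ℂ) (hdet : γ.det = 1) (hsu : mnorm γ ≠ 2) :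
    Quaternion.normSq (-(Ψ γ 1 0)⁻¹ * Ψ γ 1 1) = (2 + mnorm γ) / (mnorm γ - 2) ∧
    (Quaternion.normSq (Ψ γ 1 0))⁻¹ = 4 / (mnorm γ - 2) :=
  stmt5_general γ hdet
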